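/- arXiv:2401.11890 — 2 statements merged into one kernel-verified Lean document; each statement's English description precedes it below -/
import Mathlib

section
/- Let M ∈ ℕ, let V : Fin M → (EuclideanSpace ℝ (Fin 3) → EuclideanSpace ℝ (Fin 3)) be a family of continuously differentiable vector fields, let z ∈ Fin M → ℝ, and define T : ℝ → EuclideanSpace ℝ (Fin 3) → EuclideanSpace ℝ (Fin 3) by T t x = x + t • ∑ i, z i • V i x. Fix x, write J(t) ∈ Matrix (Fin 3) (Fin 3) ℝ for the matrix of the spatial Fréchet derivative of T t at x (in the standard basis), C(t) = (det J(t))⁻¹ • J(t)ᵀ * J(t), and A(t) = det(J(t)) • J(t)⁻¹ * (J(t)⁻¹)ᵀ. Let P_i ∈ Matrix (Fin 3) (Fin 3) ℝ be the matrix of the Fréchet derivative of V i at x and B_i = trace(P_i) • 1 − P_i − P_iᵀ. Then J(0) = 1, C'(0) = − ∑ i, z i • B_i, and A'(0) = ∑ i, z i • B_i. -/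
/-!
With `Q = ∑ i, z i • P i` the Jacobian is affine in `t`: `J t = 1 + t • Q`. Both coefficients have
the form `(d t)⁻¹ • (K t * (K t)ᵀ)` with `d = det J` and `K 0 = 1`: take `K = Jᵀ` for `C`, and
`K = adjugate J` for `A`, because `det J • J⁻¹ = adjugate J`. Such a product has derivative
`K' + K'ᵀ - d' • 1` at `0`. Here `d' = trace Q` (Jacobi's formula), and `K' = Qᵀ` for `C` while
`K' = trace Q • 1 - Q` for `A`.
-/

open Matrix

attribute [local instance] Matrix.normedAddCommGroup Matrix.normedSpace

/-- The matrix (in the standard orthonormal basis) of a continuous linear map between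
3-dimensional Euclidean spaces. -/
noncomputable def stdMatrixOf
    (f : EuclideanSpace ℝ (Fin 3) →L[ℝ] EuclideanSpace ℝ (Fin 3)) :
    Matrix (Fin 3) (Fin 3) ℝ :=
  LinearMap.toMatrix (EuclideanSpace.basisFun (Fin 3) ℝ).toBasis
    (EuclideanSpace.basisFun (Fin 3) ℝ).toBasis f.toLinearMap

open Polynomial

section MatrixCalculus

variable {𝕜 : Type*} [NontriviallyNormedField 𝕜] {l m n : Type*}

theorem hasDerivAt_matrix [Fintype n] {F : 𝕜 → Matrix m n 𝕜} {F' : Matrix m n 𝕜} {t : 𝕜} :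
    HasDerivAt F F' t ↔ ∀ i j, HasDerivAt (fun s => F s i j) (F' i j) t :=
  hasDerivAt_pi.trans (forall_congr' fun _ => hasDerivAt_pi)

theorem Matrix.hasDerivAt_map_eval [Fintype n] (P : Matrix m n 𝕜[X]) (t : 𝕜) :
    HasDerivAt (fun s => P.map (eval s)) (P.map fun p => p.derivative.eval t) t :=
  hasDerivAt_matrix.2 fun i j => (P i j).hasDerivAt t

theorem HasDerivAt.matrix_transpose [Fintype m] [Fintype n] {F : 𝕜 → Matrix m n 𝕜}
    {F' : Matrix m n 𝕜} {t : 𝕜} (hF : HasDerivAt F F' t) :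
    HasDerivAt (fun s => (F s)ᵀ) F'ᵀ t :=
  hasDerivAt_matrix.2 fun i j => hasDerivAt_matrix.1 hF j i

theorem HasDerivAt.matrix_mul [Fintype m] [Fintype n] {F : 𝕜 → Matrix l m 𝕜}
    {G : 𝕜 → Matrix m n 𝕜} {F' : Matrix l m 𝕜} {G' : Matrix m n 𝕜} {t : 𝕜}
    (hF : HasDerivAt F F' t) (hG : HasDerivAt G G' t) :
    HasDerivAt (fun s => F s * G s) (F' * G t + F t * G') t := by
  refine hasDerivAt_matrix.2 fun i j => ?_
  simp only [Matrix.mul_apply, Matrix.add_apply, ← Finset.sum_add_distrib]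
  exact HasDerivAt.fun_sum fun k _ =>
    (hasDerivAt_matrix.1 hF i k).mul (hasDerivAt_matrix.1 hG k j)

end MatrixCalculus

namespace Matrix

section Polynomial

variable {R : Type*} [CommRing R] {n : Type*} [DecidableEq n]

theorem map_eval_one_add_X_smul (Q : Matrix n n R) (t : R) :
    (1 + (X : R[X]) • Q.map C).map (eval t) = 1 + t • Q := by
  ext i j
  simp only [map_apply, add_apply, smul_apply, one_apply, smul_eq_mul, eval_add, eval_mul, eval_X,
    eval_C, apply_ite (eval t), eval_one, eval_zero]

theorem eval_det_one_add_X_smul [Fintype n] (Q : Matrix n n R) (t : R) :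
    eval t (1 + (X : R[X]) • Q.map C).det = (1 + t • Q).det := by
  rw [← map_eval_one_add_X_smul Q t, ← coe_evalRingHom, RingHom.map_det]
  rfl

theorem map_eval_adjugate_one_add_X_smul [Fintype n] (Q : Matrix n n R) (t : R) :
    (1 + (X : R[X]) • Q.map C).adjugate.map (eval t) = (1 + t • Q).adjugate := by
  rw [← map_eval_one_add_X_smul Q t, ← coe_evalRingHom]
  exact RingHom.map_adjugate (evalRingHom t) _

end Polynomial

variable {𝕜 : Type*} [NontriviallyNormedField 𝕜] {n : Type*} [Fintype n] [DecidableEq n]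

theorem hasDerivAt_one_add_smul (Q : Matrix n n 𝕜) :
    HasDerivAt (fun t : 𝕜 => 1 + t • Q) Q 0 :=
  (((hasDerivAt_id' (0 : 𝕜)).smul_const Q).const_add 1).congr_deriv (one_smul _ _)

theorem hasDerivAt_det_one_add_smul (Q : Matrix n n 𝕜) :
    HasDerivAt (fun t : 𝕜 => (1 + t • Q).det) Q.trace 0 := by
  have h := (det (1 + (X : 𝕜[X]) • Q.map C)).hasDerivAt 0
  simpa only [derivative_det_one_add_X_smul, eval_det_one_add_X_smul] using h

/-- Differentiate `adjugate (1 + t • Q) * (1 + t • Q) = det (1 + t • Q) • 1` at `t = 0`;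
the adjugate is differentiable because its entries are polynomials in `t`. -/
theorem hasDerivAt_adjugate_one_add_smul (Q : Matrix n n 𝕜) :
    HasDerivAt (fun t : 𝕜 => (1 + t • Q).adjugate) (Q.trace • 1 - Q) 0 := by
  obtain ⟨D, hD⟩ : ∃ D, HasDerivAt (fun t : 𝕜 => (1 + t • Q).adjugate) D 0 :=
    ⟨_, by simpa only [map_eval_adjugate_one_add_X_smul] using
      hasDerivAt_map_eval (1 + (X : 𝕜[X]) • Q.map C).adjugate 0⟩
  have hprod := hD.matrix_mul (hasDerivAt_one_add_smul Q)
  have hdet := (hasDerivAt_det_one_add_smul Q).smul_const (1 : Matrix n n 𝕜)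
  simp only [adjugate_mul, zero_smul, add_zero, adjugate_one, mul_one, one_mul] at hprod
  rwa [← eq_sub_iff_add_eq.2 (hprod.unique hdet)]

theorem hasDerivAt_inv_smul_mul_transpose {K : 𝕜 → Matrix n n 𝕜} {K' : Matrix n n 𝕜}
    {d : 𝕜 → 𝕜} {d' : 𝕜} (hK : HasDerivAt K K' 0) (hK0 : K 0 = 1) (hd : HasDerivAt d d' 0)
    (hd0 : d 0 = 1) :
    HasDerivAt (fun t => (d t)⁻¹ • (K t * (K t)ᵀ)) (K' + K'ᵀ - d' • 1) 0 := by
  refine ((hd.inv (by simp [hd0])).fun_smul (hK.matrix_mul hK.matrix_transpose)).congr_deriv ?_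
  simp [hd0, hK0]
  abel

/-- Also valid for singular `A`, where both sides vanish since then `A⁻¹ = 0`. -/
theorem det_smul_inv_mul_inv_transpose {K : Type*} [Field K] (A : Matrix n n K) :
    A.det • (A⁻¹ * A⁻¹ᵀ) = A.det⁻¹ • (A.adjugate * A.adjugateᵀ) := by
  rw [inv_def, Ring.inverse_eq_inv, transpose_smul, smul_mul_smul_comm, smul_smul]
  congr 1
  by_cases h : A.det = 0
  · simp [h]
  · field_simp

end Matrix

theorem hasFDerivAt_id_add_smul_sum {𝕜 E ι : Type*} [NontriviallyNormedField 𝕜]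
    [NormedAddCommGroup E] [NormedSpace 𝕜 E] [Fintype ι] {V : ι → E → E} {x : E}
    (hV : ∀ i, DifferentiableAt 𝕜 (V i) x) (z : ι → 𝕜) (t : 𝕜) :
    HasFDerivAt (fun y => y + t • ∑ i, z i • V i y)
      (ContinuousLinearMap.id 𝕜 E + t • ∑ i, z i • fderiv 𝕜 (V i) x) x :=
  (hasFDerivAt_id x).add
    ((HasFDerivAt.fun_sum fun i _ => (hV i).hasFDerivAt.const_smul (z i)).const_smul t)

noncomputable def stdMatrixOfₗ :
    (EuclideanSpace ℝ (Fin 3) →L[ℝ] EuclideanSpace ℝ (Fin 3)) →ₗ[ℝ] Matrix (Fin 3) (Fin 3) ℝ :=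
  (LinearMap.toMatrix (EuclideanSpace.basisFun (Fin 3) ℝ).toBasis
    (EuclideanSpace.basisFun (Fin 3) ℝ).toBasis).toLinearMap ∘ₗ ContinuousLinearMap.coeLM ℝ

theorem stdMatrixOfₗ_apply (f : EuclideanSpace ℝ (Fin 3) →L[ℝ] EuclideanSpace ℝ (Fin 3)) :
    stdMatrixOfₗ f = stdMatrixOf f :=
  rfl

theorem stdMatrixOf_id : stdMatrixOf (ContinuousLinearMap.id ℝ (EuclideanSpace ℝ (Fin 3))) = 1 :=
  LinearMap.toMatrix_id _

/-- For a Karhunen–Loève type deformation `T t x = x + t • ∑ i, z i • V i x`,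
the spatial Jacobian at `t = 0` is the identity and the deformation coefficients
`C(t) = (det J)⁻¹ • Jᵀ * J`, `A(t) = det J • J⁻¹ * (J⁻¹)ᵀ` satisfy
`C'(0) = -∑ i, z i • B i` and `A'(0) = ∑ i, z i • B i` with
`B i = tr(P i) • 1 - P i - (P i)ᵀ`. -/
theorem deriv_coefficients_KL_deformation
    (M : ℕ) (V : Fin M → EuclideanSpace ℝ (Fin 3) → EuclideanSpace ℝ (Fin 3))
    (hV : ∀ i, ContDiff ℝ 1 (V i)) (z : Fin M → ℝ)
    (T : ℝ → EuclideanSpace ℝ (Fin 3) → EuclideanSpace ℝ (Fin 3))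
    (hT : ∀ t x, T t x = x + t • ∑ i, z i • V i x)
    (x : EuclideanSpace ℝ (Fin 3))
    (J : ℝ → Matrix (Fin 3) (Fin 3) ℝ)
    (hJ : ∀ t, J t = stdMatrixOf (fderiv ℝ (T t) x))
    (C A : ℝ → Matrix (Fin 3) (Fin 3) ℝ)
    (hC : ∀ t, C t = ((J t).det)⁻¹ • ((J t)ᵀ * J t))
    (hA : ∀ t, A t = (J t).det • ((J t)⁻¹ * ((J t)⁻¹)ᵀ))
    (P : Fin M → Matrix (Fin 3) (Fin 3) ℝ)
    (hP : ∀ i, P i = stdMatrixOf (fderiv ℝ (V i) x))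
    (B : Fin M → Matrix (Fin 3) (Fin 3) ℝ)
    (hB : ∀ i, B i = Matrix.trace (P i) • (1 : Matrix (Fin 3) (Fin 3) ℝ) - P i - (P i)ᵀ) :
    J 0 = 1 ∧
    HasDerivAt C (-∑ i, z i • B i) 0 ∧
    HasDerivAt A (∑ i, z i • B i) 0 := by
  set Q := ∑ i, z i • P i
  have hJQ (t : ℝ) : J t = 1 + t • Q := by
    rw [hJ, funext (hT t), (hasFDerivAt_id_add_smul_sum
      (fun i => (hV i).differentiable one_ne_zero x) z t).fderiv, ← stdMatrixOfₗ_apply]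
    simp only [map_add, map_smul, map_sum, stdMatrixOfₗ_apply, stdMatrixOf_id, hP, Q]
  have hBQ : ∑ i, z i • B i = Q.trace • 1 - Q - Qᵀ := by
    simp only [hB, smul_sub, Finset.sum_sub_distrib, smul_smul, ← Finset.sum_smul, trace_sum,
      trace_smul, transpose_sum, transpose_smul, Q, smul_eq_mul]
  have hC' : C = fun t => (1 + t • Q).det⁻¹ • ((1 + t • Q)ᵀ * (1 + t • Q)ᵀᵀ) := by
    funext t; rw [hC, hJQ, transpose_transpose]
  have hA' : A = fun t => (1 + t • Q).det⁻¹ • ((1 + t • Q).adjugate * (1 + t • Q).adjugateᵀ) := by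
    funext t; rw [hA, hJQ, det_smul_inv_mul_inv_transpose]
  refine ⟨by simp [hJQ], ?_, ?_⟩
  · rw [hC']
    refine (hasDerivAt_inv_smul_mul_transpose (hasDerivAt_one_add_smul Q).matrix_transpose
      (by simp) (hasDerivAt_det_one_add_smul Q) (by simp)).congr_deriv ?_
    rw [hBQ, transpose_transpose]
    abel
  · rw [hA']
    refine (hasDerivAt_inv_smul_mul_transpose (hasDerivAt_adjugate_one_add_smul Q)
      (by simp) (hasDerivAt_det_one_add_smul Q) (by simp)).congr_deriv ?_
    rw [hBQ, transpose_sub, transpose_smul, transpose_one]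
    abel
end

section
/- Let N, m ∈ ℕ, K, M : ℝ → Matrix (Fin N) (Fin N) ℝ differentiable at 0 with M(t) symmetric for all t, E : ℝ → Matrix (Fin N) (Fin m) ℝ and Λ : ℝ → Matrix (Fin m) (Fin m) ℝ differentiable at 0, such that for all t in a neighborhood of 0: K(t) * E(t) = M(t) * E(t) * Λ(t) and (E(t))ᵀ * M(t) * E(t) = 1, and suppose Λ(0) = λ₀ • 1 for some λ₀ ∈ ℝ. Then, writing K₀ = K(0), M₀ = M(0), E₀ = E(0), and primes for derivatives at 0: (K₀ − λ₀ • M₀) * E' − M₀ * E₀ * Λ' = −(K' * E₀) + λ₀ • (M' * E₀), and (E₀)ᵀ * M₀ * E' + ((E₀)ᵀ * M₀ * E')ᵀ = −(E₀)ᵀ * M' * E₀. -/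
open Matrix Filter

attribute [local instance] Matrix.normedAddCommGroup Matrix.normedSpace

/-! Differentiate `K E = M E Λ` and `Eᵀ M E = 1` at `t = 0` by the product rule, insert
`Λ(0) = λ₀ • 1`, and use `M₀ᵀ = M₀` to recognise `E'ᵀ M₀ E₀` as the transpose of `E₀ᵀ M₀ E'`. -/

section MatrixCalculus

variable {𝕜 : Type*} [NontriviallyNormedField 𝕜] [CompleteSpace 𝕜]
  {l m n : Type*} [Fintype l] [Fintype m] [Fintype n] {x : 𝕜}

theorem HasDerivAt.matrix_mul_s9 {A : 𝕜 → Matrix l m 𝕜} {B : 𝕜 → Matrix m n 𝕜}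
    {A' : Matrix l m 𝕜} {B' : Matrix m n 𝕜} (hA : HasDerivAt A A' x) (hB : HasDerivAt B B' x) :
    HasDerivAt (fun t => A t * B t) (A' * B x + A x * B') x := by
  let mul : Matrix l m 𝕜 →L[𝕜] Matrix m n 𝕜 →L[𝕜] Matrix l n 𝕜 :=
    LinearMap.toContinuousLinearMap
      (LinearMap.toContinuousLinearMap.toLinearMap ∘ₗ mulLinearMap 𝕜)
  rw [add_comm]
  exact mul.hasDerivAt_of_bilinear (fun _ => hA) (fun _ => hB)

theorem HasDerivAt.matrix_transpose_s9 {A : 𝕜 → Matrix m n 𝕜} {A' : Matrix m n 𝕜}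
    (hA : HasDerivAt A A' x) : HasDerivAt (fun t => (A t)ᵀ) A'ᵀ x :=
  (LinearMap.toContinuousLinearMap (transposeLinearEquiv m n 𝕜 𝕜).toLinearMap).hasFDerivAt
    |>.comp_hasDerivAt x hA

end MatrixCalculus

/-- Block (degenerate) version of the discrete saddle-point system for the derivative of
an eigenspace trajectory `K(t) E(t) = M(t) E(t) Λ(t)`, `E(t)ᵀ M(t) E(t) = 1`, with
`Λ(0) = λ₀ • 1`: the main equation and the orthonormality constraint. -/
theorem discrete_eigenspace_derivative_saddle_point
    (N m : ℕ) (K M : ℝ → Matrix (Fin N) (Fin N) ℝ)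
    (K' M' : Matrix (Fin N) (Fin N) ℝ)
    (hK : HasDerivAt K K' 0) (hM : HasDerivAt M M' 0)
    (hMsymm : ∀ t, (M t)ᵀ = M t)
    (E : ℝ → Matrix (Fin N) (Fin m) ℝ) (Λ : ℝ → Matrix (Fin m) (Fin m) ℝ)
    (E' : Matrix (Fin N) (Fin m) ℝ) (Λ' : Matrix (Fin m) (Fin m) ℝ)
    (hE : HasDerivAt E E' 0) (hΛ : HasDerivAt Λ Λ' 0)
    (heig : ∀ᶠ t in nhds 0, K t * E t = M t * E t * Λ t)
    (hnorm : ∀ᶠ t in nhds 0, (E t)ᵀ * M t * E t = 1)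
    (lam0 : ℝ) (hΛ0 : Λ 0 = lam0 • (1 : Matrix (Fin m) (Fin m) ℝ)) :
    (K 0 - lam0 • M 0) * E' - M 0 * E 0 * Λ'
      = -(K' * E 0) + lam0 • (M' * E 0) ∧
    (E 0)ᵀ * M 0 * E' + ((E 0)ᵀ * M 0 * E')ᵀ = -((E 0)ᵀ * M' * E 0) := by
  have heig' : K' * E 0 + K 0 * E' = (M' * E 0 + M 0 * E') * Λ 0 + M 0 * E 0 * Λ' :=
    (hK.matrix_mul_s9 hE).unique
      (((hM.matrix_mul_s9 hE).matrix_mul_s9 hΛ).congr_of_eventuallyEq heig)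
  have hnorm' : (E'ᵀ * M 0 + (E 0)ᵀ * M') * E 0 + (E 0)ᵀ * M 0 * E' = 0 :=
    ((hE.matrix_transpose_s9.matrix_mul_s9 hM).matrix_mul_s9 hE).unique
      ((hasDerivAt_const (0 : ℝ) (1 : Matrix (Fin m) (Fin m) ℝ)).congr_of_eventuallyEq hnorm)
  constructor
  · rw [hΛ0, Matrix.mul_smul, Matrix.mul_one] at heig'
    rw [Matrix.sub_mul, Matrix.smul_mul]
    linear_combination (norm := module) heig'
  · rw [transpose_mul, transpose_mul, transpose_transpose, hMsymm, ← Matrix.mul_assoc]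
    rw [Matrix.add_mul] at hnorm'
    linear_combination (norm := module) hnorm'
end
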